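/- Let A = (A_1, ..., A_d) be a commuting d-tuple of contractions on a Hilbert space H satisfying von Neumann's inequality, and let B = (B_1, ..., B_d) be a commuting d-tuple of contractions on a Hilbert space K satisfying the matrix-version of von Neumann's inequality. Then the tuple A ⊗ B = (A_1 ⊗ B_1, ..., A_d ⊗ B_d) satisfies von Neumann's inequality: for every polynomial p in d variables, ‖p(A ⊗ B)‖ ≤ sup_{z ∈ D^d} |p(z)|. -/

import Mathlib

/-- `T^α = T_1^{α_1} ⋯ T_d^{α_d}` for a (commuting) tuple in a possibly noncommutative ring. -/
noncomputable def tuplePow {d : ℕ} {R : Type*} [Monoid R] (T : Fin d → R) (α : Fin d →₀ ℕ) : R :=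
  (List.ofFn fun j => T j ^ α j).prod

/-- Evaluation `p(T) = Σ_α a_α T^α` of a polynomial on a tuple of operators. -/
noncomputable def polyEval {d : ℕ} {R : Type*} [Ring R] [Algebra ℂ R] (T : Fin d → R)
    (p : MvPolynomial (Fin d) ℂ) : R :=
  (AddMonoidAlgebra.coeff p).sum fun α a => a • tuplePow T α

/-- `sup_{z ∈ 𝔻^d} |p(z)|`, the supremum of `|p|` over the open unit polydisc. -/
noncomputable def polySup {d : ℕ} (p : MvPolynomial (Fin d) ℂ) : ℝ :=
  ⨆ z : {z : Fin d → ℂ // ∀ i, ‖z i‖ < 1}, ‖MvPolynomial.eval z.1 p‖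

/-- The operator `(M_{ij})` on the `m`-fold Hilbert space direct sum `E^{(m)}` induced by an
`m × m` matrix of operators on `E`. -/
noncomputable def opMatrix {m : ℕ} {E : Type*} [NormedAddCommGroup E] [NormedSpace ℂ E]
    (M : Matrix (Fin m) (Fin m) (E →L[ℂ] E)) :
    PiLp 2 (fun _ : Fin m => E) →L[ℂ] PiLp 2 (fun _ : Fin m => E) :=
  ((PiLp.continuousLinearEquiv 2 ℂ (fun _ : Fin m => E)).symm.toContinuousLinearMap).comp
    ((ContinuousLinearMap.pi fun i => ∑ j, (M i j).comp (ContinuousLinearMap.proj j)).comp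
      (PiLp.continuousLinearEquiv 2 ℂ (fun _ : Fin m => E)).toContinuousLinearMap)

/-!
Write `ξ, η` from the algebraic tensor product over a common orthonormal family `(e_k)` of `H`:
`ξ = ∑ e_k ⊗ y_k` and `η = ∑ e_l ⊗ y'_l`, so that `‖ξ‖ = ‖y‖` and `‖η‖ = ‖y'‖` in `K^(N)`. Then
`⟪η, p(A ⊗ B) ξ⟫ = ⟪y', P(B) y⟫` for the matrix of polynomials
`P_{lk}(w) = ∑_α p_α ⟪e_l, A^α e_k⟫ w^α`. The matrix von Neumann inequality for `B` bounds
`‖P(B)‖` by `sup_z ‖P(z)‖`, and `P(z)` is the compression to `span e` of `p_z(A)`, where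
`p_z(w) = p(z w)`; von Neumann's inequality for `A` gives `‖p_z(A)‖ ≤ sup |p_z| ≤ sup |p|`.
Such `ξ, η` are dense, which bounds `‖p(A ⊗ B)‖`.
-/

section TuplePow
variable {d : ℕ} {M N : Type*} [Monoid M] [Monoid N]

lemma map_tuplePow {F : Type*} [FunLike F M N] [MonoidHomClass F M N] (f : F)
    (T : Fin d → M) (α : Fin d →₀ ℕ) : f (tuplePow T α) = tuplePow (f ∘ T) α := by
  simp [tuplePow, map_list_prod, List.map_ofFn, Function.comp_def]

lemma fst_tuplePow (T : Fin d → M × N) (α : Fin d →₀ ℕ) :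
    (tuplePow T α).1 = tuplePow (fun j => (T j).1) α :=
  map_tuplePow (MonoidHom.fst M N) T α

lemma snd_tuplePow (T : Fin d → M × N) (α : Fin d →₀ ℕ) :
    (tuplePow T α).2 = tuplePow (fun j => (T j).2) α :=
  map_tuplePow (MonoidHom.snd M N) T α

lemma tuplePow_mem {S : Submonoid M} {T : Fin d → M} (hT : ∀ j, T j ∈ S) (α : Fin d →₀ ℕ) :
    tuplePow T α ∈ S :=
  S.list_prod_mem <| by simpa [List.mem_ofFn] using fun j => S.pow_mem (hT j) (α j)

end TuplePow

section PolyEval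
variable {d : ℕ} {R : Type*} [Ring R] [Algebra ℂ R] (T : Fin d → R)

lemma polyEval_eq_sum (p : MvPolynomial (Fin d) ℂ) :
    polyEval T p = ∑ α ∈ p.support, p.coeff α • tuplePow T α := by
  rw [polyEval, MvPolynomial.sum_def]

lemma polyEval_add (p q : MvPolynomial (Fin d) ℂ) :
    polyEval T (p + q) = polyEval T p + polyEval T q :=
  Finsupp.sum_add_index' (fun _ => zero_smul ℂ _) (fun _ _ _ => add_smul _ _ _)

lemma polyEval_monomial (α : Fin d →₀ ℕ) (c : ℂ) :
    polyEval T (MvPolynomial.monomial α c) = c • tuplePow T α :=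
  MvPolynomial.sum_monomial_eq (zero_smul ℂ _)

lemma polyEval_sum_monomial {ι : Type*} (s : Finset ι) (α : ι → Fin d →₀ ℕ) (c : ι → ℂ) :
    polyEval T (∑ i ∈ s, MvPolynomial.monomial (α i) (c i)) = ∑ i ∈ s, c i • tuplePow T (α i) := by
  calc _ = ∑ i ∈ s, polyEval T (MvPolynomial.monomial (α i) (c i)) :=
        map_sum (AddMonoidHom.mk' (polyEval T) (polyEval_add T)) _ s
    _ = _ := by simp only [polyEval_monomial]

end PolyEval

section PolySup
variable {d : ℕ}

lemma bddAbove_range_norm_eval (p : MvPolynomial (Fin d) ℂ) :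
    BddAbove (Set.range fun z : {z : Fin d → ℂ // ∀ i, ‖z i‖ < 1} =>
      ‖MvPolynomial.eval z.1 p‖) := by
  refine ((isCompact_closedBall (0 : Fin d → ℂ) 1).image
    (MvPolynomial.continuous_eval p).norm).bddAbove.mono ?_
  rintro _ ⟨z, rfl⟩
  exact ⟨z.1, mem_closedBall_zero_iff.2 <|
    (pi_norm_le_iff_of_nonneg zero_le_one).2 fun i => (z.2 i).le, rfl⟩

lemma norm_eval_le_polySup (p : MvPolynomial (Fin d) ℂ) {z : Fin d → ℂ} (hz : ∀ i, ‖z i‖ < 1) :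
    ‖MvPolynomial.eval z p‖ ≤ polySup p :=
  le_ciSup (bddAbove_range_norm_eval p) ⟨z, hz⟩

lemma polySup_nonneg (p : MvPolynomial (Fin d) ℂ) : 0 ≤ polySup p :=
  Real.iSup_nonneg fun _ => norm_nonneg _

noncomputable def scaledPoly (z : Fin d → ℂ) (p : MvPolynomial (Fin d) ℂ) :
    MvPolynomial (Fin d) ℂ :=
  ∑ α ∈ p.support, MvPolynomial.monomial α (p.coeff α * ∏ i, z i ^ α i)

lemma eval_scaledPoly (z w : Fin d → ℂ) (p : MvPolynomial (Fin d) ℂ) :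
    MvPolynomial.eval w (scaledPoly z p) = MvPolynomial.eval (z * w) p := by
  rw [scaledPoly, map_sum, MvPolynomial.eval_eq']
  refine Finset.sum_congr rfl fun α _ => ?_
  rw [MvPolynomial.eval_monomial, Finsupp.prod_fintype _ _ fun i => pow_zero _, mul_assoc,
    ← Finset.prod_mul_distrib]
  simp [mul_pow]

lemma polySup_scaledPoly_le {z : Fin d → ℂ} (hz : ∀ i, ‖z i‖ ≤ 1) (p : MvPolynomial (Fin d) ℂ) :
    polySup (scaledPoly z p) ≤ polySup p := by
  refine Real.iSup_le (fun w => ?_) (polySup_nonneg p)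
  rw [eval_scaledPoly]
  refine norm_eval_le_polySup p fun i => ?_
  calc ‖z i * w.1 i‖ = ‖z i‖ * ‖w.1 i‖ := norm_mul _ _
    _ ≤ 1 * ‖w.1 i‖ := by gcongr; exact hz i
    _ < 1 := by simpa using w.2 i

end PolySup

section InnerProduct
variable {F G : Type*} [NormedAddCommGroup F] [InnerProductSpace ℂ F]
  [NormedAddCommGroup G] [InnerProductSpace ℂ G]

lemma norm_eq_norm_of_inner_self_eq {u : F} {v : G} (h : inner ℂ u u = inner ℂ v v) :
    ‖u‖ = ‖v‖ := by
  rw [inner_self_eq_norm_sq_to_K, inner_self_eq_norm_sq_to_K] at h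
  exact (pow_left_inj₀ (norm_nonneg u) (norm_nonneg v) two_ne_zero).1 (by exact_mod_cast h)

lemma ContinuousLinearMap.opNorm_le_of_inner_le (T : F →L[ℂ] G) {C : ℝ} (hC : 0 ≤ C)
    (h : ∀ u v, ‖inner ℂ v (T u)‖ ≤ C * ‖u‖ * ‖v‖) : ‖T‖ ≤ C := by
  refine T.opNorm_le_bound hC fun u => ?_
  rcases (norm_nonneg (T u)).eq_or_lt with hTu | hTu
  · rw [← hTu]; positivity
  · refine le_of_mul_le_mul_right ?_ hTu
    simpa [inner_self_eq_norm_sq_to_K, sq] using h u (T u)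

lemma ContinuousLinearMap.opNorm_le_of_dense_inner_le (T : F →L[ℂ] G) {S : Submodule ℂ F}
    {S' : Submodule ℂ G} (hS : S.topologicalClosure = ⊤) (hS' : S'.topologicalClosure = ⊤)
    {C : ℝ} (hC : 0 ≤ C) (h : ∀ u ∈ S, ∀ v ∈ S', ‖inner ℂ v (T u)‖ ≤ C * ‖u‖ * ‖v‖) :
    ‖T‖ ≤ C := by
  refine T.opNorm_le_of_inner_le hC ?_
  have hclosed : IsClosed {q : F × G | ‖inner ℂ q.2 (T q.1)‖ ≤ C * ‖q.1‖ * ‖q.2‖} :=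
    isClosed_le (by fun_prop) (by fun_prop)
  have hdense : DenseRange (Prod.map (Subtype.val : S → F) (Subtype.val : S' → G)) :=
    (Submodule.dense_iff_topologicalClosure_eq_top.2 hS).denseRange_val.prodMap
      (Submodule.dense_iff_topologicalClosure_eq_top.2 hS').denseRange_val
  exact fun u v => isClosed_property hdense hclosed (fun q => h _ q.1.2 _ q.2.2) (u, v)

lemma Orthonormal.norm_sum_smul {ι : Type*} [Fintype ι] {e : ι → F} (he : Orthonormal ℂ e)
    (c : EuclideanSpace ℂ ι) : ‖∑ k, c k • e k‖ = ‖c‖ := by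
  refine norm_eq_norm_of_inner_self_eq ?_
  rw [he.inner_sum, PiLp.inner_apply]
  simp [mul_comm, Complex.mul_conj, Complex.normSq_eq_norm_sq]

lemma Orthonormal.norm_toEuclideanCLM_compression_le {ι : Type*} [Fintype ι] [DecidableEq ι]
    {e : ι → F} (he : Orthonormal ℂ e) (T : F →L[ℂ] F) :
    ‖Matrix.toEuclideanCLM (𝕜 := ℂ) (Matrix.of fun l k => inner ℂ (e l) (T (e k)))‖ ≤ ‖T‖ := by
  refine ContinuousLinearMap.opNorm_le_of_inner_le _ (norm_nonneg T) fun c c' => ?_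
  have hinner : inner ℂ c' (Matrix.toEuclideanCLM (𝕜 := ℂ)
      (Matrix.of fun l k => inner ℂ (e l) (T (e k))) c) =
      inner ℂ (∑ l, c' l • e l) (T (∑ k, c k • e k)) := by
    simp only [PiLp.inner_apply, Matrix.ofLp_toEuclideanCLM, Matrix.mulVec, dotProduct,
      Matrix.of_apply, RCLike.inner_apply, Finset.sum_mul, map_sum, map_smul, inner_sum, sum_inner,
      inner_smul_left, inner_smul_right, Finset.mul_sum]
    exact Finset.sum_comm.trans <|
      Finset.sum_congr rfl fun _ _ => Finset.sum_congr rfl fun _ _ => by ring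
  rw [hinner, ← he.norm_sum_smul c, ← he.norm_sum_smul c']
  calc _ ≤ ‖∑ l, c' l • e l‖ * ‖T (∑ k, c k • e k)‖ := norm_inner_le_norm _ _
    _ ≤ ‖∑ l, c' l • e l‖ * (‖T‖ * ‖∑ k, c k • e k‖) := by gcongr; exact T.le_opNorm _
    _ = _ := by ring

end InnerProduct

lemma opMatrix_apply {m : ℕ} {E : Type*} [NormedAddCommGroup E] [NormedSpace ℂ E]
    (M : Matrix (Fin m) (Fin m) (E →L[ℂ] E)) (Y : PiLp 2 (fun _ : Fin m => E)) (i : Fin m) :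
    opMatrix M Y i = ∑ j, M i j (Y j) := by
  simp [opMatrix]

section Compression
variable {d : ℕ} {H : Type*} [NormedAddCommGroup H] [InnerProductSpace ℂ H]
  {ι : Type*}

noncomputable def compressedPoly (A : Fin d → (H →L[ℂ] H)) (e : ι → H)
    (p : MvPolynomial (Fin d) ℂ) : Matrix ι ι (MvPolynomial (Fin d) ℂ) :=
  Matrix.of fun l k =>
    ∑ α ∈ p.support, MvPolynomial.monomial α (p.coeff α * inner ℂ (e l) (tuplePow A α (e k)))

lemma map_eval_compressedPoly (A : Fin d → (H →L[ℂ] H)) (e : ι → H)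
    (p : MvPolynomial (Fin d) ℂ) (z : Fin d → ℂ) :
    (compressedPoly A e p).map (MvPolynomial.eval z) =
      Matrix.of fun l k => inner ℂ (e l) (polyEval A (scaledPoly z p) (e k)) := by
  ext l k
  simp [compressedPoly, scaledPoly, polyEval_sum_monomial, MvPolynomial.eval_monomial,
    Finsupp.prod_fintype, mul_right_comm]

lemma iSup_norm_compressedPoly_le [Fintype ι] [DecidableEq ι] {A : Fin d → (H →L[ℂ] H)}
    (hAvN : ∀ p : MvPolynomial (Fin d) ℂ, ‖polyEval A p‖ ≤ polySup p) {e : ι → H}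
    (he : Orthonormal ℂ e) (p : MvPolynomial (Fin d) ℂ) :
    ⨆ z : {z : Fin d → ℂ // ∀ i, ‖z i‖ < 1},
      ‖Matrix.toEuclideanCLM (𝕜 := ℂ) ((compressedPoly A e p).map (MvPolynomial.eval z.1))‖ ≤
      polySup p := by
  refine Real.iSup_le (fun z => ?_) (polySup_nonneg p)
  rw [map_eval_compressedPoly]
  calc _ ≤ ‖polyEval A (scaledPoly z.1 p)‖ := he.norm_toEuclideanCLM_compression_le _
    _ ≤ polySup (scaledPoly z.1 p) := hAvN _
    _ ≤ polySup p := polySup_scaledPoly_le (fun i => (z.2 i).le) p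

end Compression

section Tensor
variable {d : ℕ} {H K E : Type*}
  [NormedAddCommGroup H] [InnerProductSpace ℂ H]
  [NormedAddCommGroup K] [InnerProductSpace ℂ K]
  [NormedAddCommGroup E] [InnerProductSpace ℂ E]
  (t : H →ₗ[ℂ] K →ₗ[ℂ] E)

def tensorIntertwiners : Submonoid ((E →L[ℂ] E) × (H →L[ℂ] H) × (K →L[ℂ] K)) where
  carrier := {S | ∀ x y, S.1 (t x y) = t (S.2.1 x) (S.2.2 y)}
  one_mem' := fun _ _ => rfl
  mul_mem' {a b} ha hb x y := by
    change a.1 (b.1 (t x y)) = t (a.2.1 (b.2.1 x)) (a.2.2 (b.2.2 y))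
    rw [hb, ha]

variable {t} {A : Fin d → (H →L[ℂ] H)} {B : Fin d → (K →L[ℂ] K)} {AB : Fin d → (E →L[ℂ] E)}

lemma tuplePow_apply_tmul (hAB : ∀ j x y, AB j (t x y) = t (A j x) (B j y))
    (α : Fin d →₀ ℕ) (x : H) (y : K) :
    tuplePow AB α (t x y) = t (tuplePow A α x) (tuplePow B α y) := by
  have h := tuplePow_mem (S := tensorIntertwiners t) (T := fun j => (AB j, A j, B j))
    (fun j => hAB j) α x y
  simpa only [fst_tuplePow, snd_tuplePow] using h

lemma polyEval_apply_tmul (hAB : ∀ j x y, AB j (t x y) = t (A j x) (B j y))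
    (p : MvPolynomial (Fin d) ℂ) (x : H) (y : K) :
    polyEval AB p (t x y) = ∑ α ∈ p.support, p.coeff α • t (tuplePow A α x) (tuplePow B α y) := by
  simp [polyEval_eq_sum, tuplePow_apply_tmul hAB]

lemma span_tmul_mono {S S' : Submodule ℂ H} (h : S ≤ S') :
    Submodule.span ℂ {e : E | ∃ x ∈ S, ∃ y, e = t x y} ≤
      Submodule.span ℂ {e : E | ∃ x ∈ S', ∃ y, e = t x y} :=
  Submodule.span_mono fun _ ⟨x, hx, y, he⟩ => ⟨x, h hx, y, he⟩

lemma exists_finiteDimensional_mem_span_tmul {ξ : E}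
    (hξ : ξ ∈ Submodule.span ℂ {e : E | ∃ x y, e = t x y}) :
    ∃ S : Submodule ℂ H, FiniteDimensional ℂ S ∧
      ξ ∈ Submodule.span ℂ {e : E | ∃ x ∈ S, ∃ y, e = t x y} := by
  induction hξ using Submodule.span_induction with
  | mem _ h =>
    obtain ⟨x, y, rfl⟩ := h
    exact ⟨ℂ ∙ x, inferInstance,
      Submodule.subset_span ⟨x, Submodule.mem_span_singleton_self x, y, rfl⟩⟩
  | zero => exact ⟨⊥, inferInstance, Submodule.zero_mem _⟩
  | add _ _ _ _ h h' =>
    obtain ⟨S, _, hS⟩ := h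
    obtain ⟨S', _, hS'⟩ := h'
    exact ⟨S ⊔ S', inferInstance, Submodule.add_mem _ (span_tmul_mono le_sup_left hS)
      (span_tmul_mono le_sup_right hS')⟩
  | smul c _ _ h =>
    obtain ⟨S, hS, hξ⟩ := h
    exact ⟨S, hS, Submodule.smul_mem _ c hξ⟩

lemma OrthonormalBasis.exists_sum_tmul_eq {ι : Type*} [Fintype ι] {S : Submodule ℂ H}
    (b : OrthonormalBasis ι ℂ S) {ξ : E}
    (hξ : ξ ∈ Submodule.span ℂ {e : E | ∃ x ∈ S, ∃ y, e = t x y}) :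
    ∃ y : ι → K, ξ = ∑ j, t (b j) (y j) := by
  induction hξ using Submodule.span_induction with
  | mem _ h =>
    obtain ⟨x, hx, y, rfl⟩ := h
    refine ⟨fun j => inner ℂ (b j : H) x • y, ?_⟩
    conv_lhs => rw [← Submodule.coe_mk x hx, ← b.sum_repr' ⟨x, hx⟩]
    simp [map_sum, Submodule.coe_inner]
  | zero => exact ⟨0, by simp⟩
  | add _ _ _ _ h h' =>
    obtain ⟨y, rfl⟩ := h
    obtain ⟨y', rfl⟩ := h'
    exact ⟨y + y', by simp [Finset.sum_add_distrib]⟩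
  | smul c _ _ h =>
    obtain ⟨y, rfl⟩ := h
    exact ⟨c • y, by simp [Finset.smul_sum]⟩

lemma exists_orthonormal_sum_tmul {ξ η : E}
    (hξ : ξ ∈ Submodule.span ℂ {e : E | ∃ x y, e = t x y})
    (hη : η ∈ Submodule.span ℂ {e : E | ∃ x y, e = t x y}) :
    ∃ (N : ℕ) (e : Fin N → H) (y y' : Fin N → K), Orthonormal ℂ e ∧
      ξ = ∑ j, t (e j) (y j) ∧ η = ∑ j, t (e j) (y' j) := by
  obtain ⟨S, _, hξS⟩ := exists_finiteDimensional_mem_span_tmul hξ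
  obtain ⟨S', _, hηS'⟩ := exists_finiteDimensional_mem_span_tmul hη
  let b := stdOrthonormalBasis ℂ (S ⊔ S' : Submodule ℂ H)
  obtain ⟨y, hy⟩ := b.exists_sum_tmul_eq (span_tmul_mono le_sup_left hξS)
  obtain ⟨y', hy'⟩ := b.exists_sum_tmul_eq (span_tmul_mono le_sup_right hηS')
  exact ⟨_, fun j => b j, y, y', b.orthonormal.comp_linearIsometry (S ⊔ S').subtypeₗᵢ, hy, hy'⟩

lemma inner_sum_tmul_sum_tmul
    (ht_inner : ∀ x x' y y', inner ℂ (t x y) (t x' y') = inner ℂ x x' * inner ℂ y y')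
    {ι : Type*} [Fintype ι] {e : ι → H} (he : Orthonormal ℂ e) (y y' : ι → K) :
    inner ℂ (∑ j, t (e j) (y j)) (∑ j, t (e j) (y' j)) = ∑ j, inner ℂ (y j) (y' j) := by
  classical
  simp [ht_inner, orthonormal_iff_ite.1 he]

lemma norm_sum_tmul
    (ht_inner : ∀ x x' y y', inner ℂ (t x y) (t x' y') = inner ℂ x x' * inner ℂ y y')
    {ι : Type*} [Fintype ι] {e : ι → H} (he : Orthonormal ℂ e) (y : ι → K) :
    ‖∑ j, t (e j) (y j)‖ = ‖WithLp.toLp 2 y‖ :=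
  norm_eq_norm_of_inner_self_eq <| by
    rw [inner_sum_tmul_sum_tmul ht_inner he, PiLp.inner_apply]

lemma inner_sum_tmul_polyEval_sum_tmul
    (ht_inner : ∀ x x' y y', inner ℂ (t x y) (t x' y') = inner ℂ x x' * inner ℂ y y')
    (hAB : ∀ j x y, AB j (t x y) = t (A j x) (B j y)) {N : ℕ} (e : Fin N → H)
    (y y' : Fin N → K) (p : MvPolynomial (Fin d) ℂ) :
    inner ℂ (∑ l, t (e l) (y' l)) (polyEval AB p (∑ k, t (e k) (y k))) =
      inner ℂ (WithLp.toLp 2 y')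
        (opMatrix (Matrix.of fun l k => polyEval B (compressedPoly A e p l k))
          (WithLp.toLp 2 y)) := by
  simp only [map_sum, polyEval_apply_tmul hAB, PiLp.inner_apply, opMatrix_apply, compressedPoly,
    Matrix.of_apply, polyEval_sum_monomial, sum_inner, inner_sum, inner_smul_right, ht_inner,
    FunLike.coe_sum, Finset.sum_apply, smul_apply, Finset.mul_sum, mul_assoc]
  exact (Finset.sum_congr rfl fun _ _ => Finset.sum_comm).trans Finset.sum_comm

end Tensor

theorem tensor_vN_of_vN_and_matrix_vN_general {d : ℕ} {H K E : Type*}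
    [NormedAddCommGroup H] [InnerProductSpace ℂ H]
    [NormedAddCommGroup K] [InnerProductSpace ℂ K]
    [NormedAddCommGroup E] [InnerProductSpace ℂ E]
    (A : Fin d → (H →L[ℂ] H)) (B : Fin d → (K →L[ℂ] K))
    (hAvN : ∀ p : MvPolynomial (Fin d) ℂ, ‖polyEval A p‖ ≤ polySup p)
    (hBmatvN : ∀ (m : ℕ) (P : Matrix (Fin m) (Fin m) (MvPolynomial (Fin d) ℂ)),
      ‖opMatrix (Matrix.of fun i j => polyEval B (P i j))‖ ≤
        ⨆ z : {z : Fin d → ℂ // ∀ i, ‖z i‖ < 1},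
          ‖Matrix.toEuclideanCLM (𝕜 := ℂ) (P.map (MvPolynomial.eval z.1))‖)
    (t : H →ₗ[ℂ] K →ₗ[ℂ] E)
    (ht_inner : ∀ (x x' : H) (y y' : K),
      (inner ℂ (t x y) (t x' y') : ℂ) = (inner ℂ x x' : ℂ) * (inner ℂ y y' : ℂ))
    (ht_dense : (Submodule.span ℂ {e : E | ∃ x y, e = t x y}).topologicalClosure = ⊤)
    (AB : Fin d → (E →L[ℂ] E))
    (hAB : ∀ j x y, AB j (t x y) = t (A j x) (B j y)) :
    ∀ p : MvPolynomial (Fin d) ℂ, ‖polyEval AB p‖ ≤ polySup p := by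
  intro p
  refine (polyEval AB p).opNorm_le_of_dense_inner_le ht_dense ht_dense (polySup_nonneg p)
    fun ξ hξ η hη => ?_
  obtain ⟨N, e, y, y', he, rfl, rfl⟩ := exists_orthonormal_sum_tmul hξ hη
  rw [inner_sum_tmul_polyEval_sum_tmul ht_inner hAB, norm_sum_tmul ht_inner he,
    norm_sum_tmul ht_inner he]
  set M := opMatrix (Matrix.of fun l k => polyEval B (compressedPoly A e p l k))
  have hM : ‖M‖ ≤ polySup p :=
    (hBmatvN N (compressedPoly A e p)).trans (iSup_norm_compressedPoly_le hAvN he p)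
  calc _ ≤ ‖WithLp.toLp 2 y'‖ * ‖M (WithLp.toLp 2 y)‖ := norm_inner_le_norm _ _
    _ ≤ ‖WithLp.toLp 2 y'‖ * (‖M‖ * ‖WithLp.toLp 2 y‖) := by gcongr; exact M.le_opNorm _
    _ ≤ ‖WithLp.toLp 2 y'‖ * (polySup p * ‖WithLp.toLp 2 y‖) := by gcongr
    _ = _ := by ring

/-- Let `A` be a commuting `d`-tuple of contractions on a Hilbert space `H`
satisfying von Neumann's inequality, and `B` a commuting `d`-tuple of contractions on a
Hilbert space `K` satisfying the matrix-version of von Neumann's inequality. Then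
`A ⊗ B = (A_1 ⊗ B_1, …, A_d ⊗ B_d)` on the Hilbert space tensor product `H ⊗ K` (axiomatized
here by a bilinear map `t` with `⟪t x y, t x' y'⟫ = ⟪x,x'⟫⟪y,y'⟫`, total elementary tensors,
and `(A_j ⊗ B_j)(t x y) = t (A_j x) (B_j y)`) satisfies von Neumann's inequality. -/
theorem tensor_vN_of_vN_and_matrix_vN {d : ℕ} {H K E : Type*}
    [NormedAddCommGroup H] [InnerProductSpace ℂ H] [CompleteSpace H]
    [NormedAddCommGroup K] [InnerProductSpace ℂ K] [CompleteSpace K]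
    [NormedAddCommGroup E] [InnerProductSpace ℂ E] [CompleteSpace E]
    (A : Fin d → (H →L[ℂ] H)) (B : Fin d → (K →L[ℂ] K))
    (hAcomm : ∀ i j, Commute (A i) (A j)) (hBcomm : ∀ i j, Commute (B i) (B j))
    (hAcontr : ∀ j, ‖A j‖ ≤ 1) (hBcontr : ∀ j, ‖B j‖ ≤ 1)
    (hAvN : ∀ p : MvPolynomial (Fin d) ℂ, ‖polyEval A p‖ ≤ polySup p)
    (hBmatvN : ∀ (m : ℕ) (P : Matrix (Fin m) (Fin m) (MvPolynomial (Fin d) ℂ)),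
      ‖opMatrix (Matrix.of fun i j => polyEval B (P i j))‖ ≤
        ⨆ z : {z : Fin d → ℂ // ∀ i, ‖z i‖ < 1},
          ‖Matrix.toEuclideanCLM (𝕜 := ℂ) (P.map (MvPolynomial.eval z.1))‖)
    (t : H →ₗ[ℂ] K →ₗ[ℂ] E)
    (ht_inner : ∀ (x x' : H) (y y' : K),
      (inner ℂ (t x y) (t x' y') : ℂ) = (inner ℂ x x' : ℂ) * (inner ℂ y y' : ℂ))
    (ht_dense : (Submodule.span ℂ {e : E | ∃ x y, e = t x y}).topologicalClosure = ⊤)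
    (AB : Fin d → (E →L[ℂ] E))
    (hAB : ∀ j x y, AB j (t x y) = t (A j x) (B j y)) :
    ∀ p : MvPolynomial (Fin d) ℂ, ‖polyEval AB p‖ ≤ polySup p :=
  tensor_vN_of_vN_and_matrix_vN_general A B hAvN hBmatvN t ht_inner ht_dense AB hAB
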